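/- Every m×n bimatrix game G can be written in exactly one way as G = P + H + E, where P is a normalized potential game, H is a normalized harmonic game, and E is a non-strategic game; that is, the space of m×n bimatrix games is the direct sum 𝓟 ⊕ 𝓗 ⊕ 𝓔. -/

import Mathlib

open Matrix Filter

abbrev Game (m n : ℕ) := Matrix (Fin m) (Fin n) ℝ × Matrix (Fin m) (Fin n) ℝ

/-- A non-strategic game: player 1's payoff depends only on player 2's action and vice versa. -/
def NonStrategic {m n : ℕ} (G : Game m n) : Prop :=
  ∃ (x : Fin n → ℝ) (y : Fin m → ℝ), (∀ i j, G.1 i j = x j) ∧ (∀ i j, G.2 i j = y i)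

/-- Identical interest games: A = B. -/
def IdInterest {m n : ℕ} (G : Game m n) : Prop := G.1 = G.2

/-- Zero-sum games: A + B = 0. -/
def ZeroSum {m n : ℕ} (G : Game m n) : Prop := G.1 + G.2 = 0

/-- Normalized games: columns of A and rows of B sum to zero. -/
def Normalized {m n : ℕ} (G : Game m n) : Prop :=
  (∀ j, ∑ i, G.1 i j = 0) ∧ (∀ i, ∑ j, G.2 i j = 0)

/-- Potential games: sums of an identical-interest game and a non-strategic game (𝓘+𝓔). -/
def IsPotentialGame {m n : ℕ} (G : Game m n) : Prop :=
  ∃ I E : Game m n, IdInterest I ∧ NonStrategic E ∧ G = I + E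

/-- Games additionally equivalent to a zero-sum game (𝓩+𝓔). -/
def IsZeroSumEquivAdd {m n : ℕ} (G : Game m n) : Prop :=
  ∃ Z E : Game m n, ZeroSum Z ∧ NonStrategic E ∧ G = Z + E

/-- Zero-sum equivalent potential games, 𝓑 = (𝓘+𝓔) ∩ (𝓩+𝓔). -/
def IsZSEP {m n : ℕ} (G : Game m n) : Prop := IsPotentialGame G ∧ IsZeroSumEquivAdd G

/-- Normalized harmonic games: normalized with mA + nB = 0. -/
def NormHarmonic (m n : ℕ) (G : Game m n) : Prop :=
  Normalized G ∧ (m : ℝ) • G.1 + (n : ℝ) • G.2 = 0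

/-- Normalized potential games, 𝓟 = 𝓝 ∩ (𝓘+𝓔). -/
def NormPotential {m n : ℕ} (G : Game m n) : Prop :=
  Normalized G ∧ IsPotentialGame G

/-- Strategic equivalence: G' = (αA, βB) + E with α, β > 0 and E non-strategic. -/
def StratEquiv {m n : ℕ} (G G' : Game m n) : Prop :=
  ∃ α β : ℝ, 0 < α ∧ 0 < β ∧ ∃ E : Game m n,
    NonStrategic E ∧ G'.1 = α • G.1 + E.1 ∧ G'.2 = β • G.2 + E.2

/-- G ∈ 𝓢(𝓩): G is strategically equivalent to some zero-sum game. -/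
def StratEquivZeroSum {m n : ℕ} (G : Game m n) : Prop :=
  ∃ Z : Game m n, ZeroSum Z ∧ StratEquiv G Z

/-- G ∈ 𝓢(𝓘): G is strategically equivalent to some identical interest game. -/
def StratEquivIdInterest {m n : ℕ} (G : Game m n) : Prop :=
  ∃ I : Game m n, IdInterest I ∧ StratEquiv G I

/-- Nash equilibrium of a bimatrix game. -/
def IsNash {m n : ℕ} (G : Game m n) (p : Fin m → ℝ) (q : Fin n → ℝ) : Prop :=
  p ∈ stdSimplex ℝ (Fin m) ∧ q ∈ stdSimplex ℝ (Fin n) ∧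
  (∀ p' ∈ stdSimplex ℝ (Fin m), p' ⬝ᵥ G.1.mulVec q ≤ p ⬝ᵥ G.1.mulVec q) ∧
  (∀ q' ∈ stdSimplex ℝ (Fin n), p ⬝ᵥ G.2.mulVec q' ≤ p ⬝ᵥ G.2.mulVec q)

/-- Discrete-time fictitious play sequence of a bimatrix game. -/
def IsDFP {m n : ℕ} (G : Game m n) (p : ℕ → Fin m → ℝ) (q : ℕ → Fin n → ℝ) : Prop :=
  (∀ t, p t ∈ stdSimplex ℝ (Fin m) ∧ q t ∈ stdSimplex ℝ (Fin n)) ∧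
  ∀ t : ℕ, ∃ (i : Fin m) (j : Fin n),
    (∀ i', (G.1.mulVec (q t)) i' ≤ (G.1.mulVec (q t)) i) ∧
    (∀ j', (G.2.vecMul (p t)) j' ≤ (G.2.vecMul (p t)) j) ∧
    p (t + 1) = ((t : ℝ) / (t + 1)) • p t + ((1 : ℝ) / (t + 1)) • (Pi.single i 1 : Fin m → ℝ) ∧
    q (t + 1) = ((t : ℝ) / (t + 1)) • q t + ((1 : ℝ) / (t + 1)) • (Pi.single j 1 : Fin n → ℝ)

/-- The fictitious play property: every DFP sequence converges to the set of Nash equilibria. -/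
def HasFPP {m n : ℕ} (G : Game m n) : Prop :=
  ∀ p q, IsDFP G p q →
    Tendsto (fun t => Metric.infDist (p t, q t)
      {pq : (Fin m → ℝ) × (Fin n → ℝ) | IsNash G pq.1 pq.2}) atTop (nhds 0)

/-- The class 𝓓: at least one payoff matrix has the form M i j = x i + y j. -/
def InD {m n : ℕ} (G : Game m n) : Prop :=
  (∃ (x : Fin m → ℝ) (y : Fin n → ℝ), ∀ i j, G.1 i j = x i + y j) ∨
  (∃ (x : Fin m → ℝ) (y : Fin n → ℝ), ∀ i j, G.2 i j = x i + y j)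

/-!
Weight the two payoff matrices by the numbers of rows and columns: put
`⟪(A, B), (A', B')⟫ = ∑ᵢⱼ (m Aᵢⱼ A'ᵢⱼ + n Bᵢⱼ B'ᵢⱼ)`. Non-strategic games are orthogonal to
normalized ones, and a normalized game with `m A + n B = 0` is orthogonal to every game in `𝓘 + 𝓔`,
so `𝓟`, `𝓗` and `𝓔` are pairwise orthogonal subspaces and the decomposition is unique. For
existence, `E` collects the column means of `A` and the row means of `B`; of the normalized rest
`N`, the harmonic part is a multiple of the double centering of `N.1 - N.2`, and what is left has
`A - B` of the form `uᵢ + vⱼ`, hence lies in `𝓘 + 𝓔`.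
-/

open Finset

variable {m n : ℕ}

lemma NonStrategic.sub {E E' : Game m n} (h : NonStrategic E) (h' : NonStrategic E') :
    NonStrategic (E - E') := by
  obtain ⟨x, y, hx, hy⟩ := h
  obtain ⟨x', y', hx', hy'⟩ := h'
  exact ⟨x - x', y - y', fun i j => by simp [hx, hx'], fun i j => by simp [hy, hy']⟩

lemma Normalized.sub {N N' : Game m n} (h : Normalized N) (h' : Normalized N') :
    Normalized (N - N') :=
  ⟨fun j => by simp [sum_sub_distrib, h.1 j, h'.1 j],
    fun i => by simp [sum_sub_distrib, h.2 i, h'.2 i]⟩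

lemma IsPotentialGame.sub {P P' : Game m n} (h : IsPotentialGame P) (h' : IsPotentialGame P') :
    IsPotentialGame (P - P') := by
  obtain ⟨I, E, hI, hE, rfl⟩ := h
  obtain ⟨I', E', hI', hE', rfl⟩ := h'
  exact ⟨I - I', E - E', congrArg₂ (· - ·) hI hI', hE.sub hE', by abel⟩

lemma NormPotential.sub {P P' : Game m n} (h : NormPotential P) (h' : NormPotential P') :
    NormPotential (P - P') :=
  ⟨h.1.sub h'.1, h.2.sub h'.2⟩

lemma NormHarmonic.sub {H H' : Game m n} (h : NormHarmonic m n H) (h' : NormHarmonic m n H') :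
    NormHarmonic m n (H - H') := by
  refine ⟨h.1.sub h'.1, ?_⟩
  calc (m : ℝ) • (H - H').1 + (n : ℝ) • (H - H').2
      = ((m : ℝ) • H.1 + (n : ℝ) • H.2) - ((m : ℝ) • H'.1 + (n : ℝ) • H'.2) := by
        simp only [Prod.fst_sub, Prod.snd_sub, smul_sub]; abel
    _ = 0 := by rw [h.2, h'.2, sub_zero]

def weightedInner (a b : ℝ) (G G' : Game m n) : ℝ :=
  ∑ i, ∑ j, (a * (G.1 i j * G'.1 i j) + b * (G.2 i j * G'.2 i j))

section weightedInner

variable {a b : ℝ}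

lemma weightedInner_comm (G G' : Game m n) : weightedInner a b G G' = weightedInner a b G' G := by
  simp only [weightedInner, mul_comm (G.1 _ _), mul_comm (G.2 _ _)]

lemma weightedInner_add_right (G G₁ G₂ : Game m n) :
    weightedInner a b G (G₁ + G₂) = weightedInner a b G G₁ + weightedInner a b G G₂ := by
  simp only [weightedInner, ← sum_add_distrib, Prod.fst_add, Prod.snd_add, Matrix.add_apply]
  exact sum_congr rfl fun i _ => sum_congr rfl fun j _ => by ring

lemma weightedInner_zero_right (G : Game m n) : weightedInner a b G 0 = 0 := by
  simp [weightedInner]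

lemma eq_zero_of_weightedInner_self_eq_zero (ha : 0 < a) (hb : 0 < b) {G : Game m n}
    (h : weightedInner a b G G = 0) : G = 0 := by
  have hnonneg : ∀ (x : ℝ) (c : ℝ), 0 < c → 0 ≤ c * (x * x) :=
    fun x c hc => mul_nonneg hc.le (mul_self_nonneg x)
  have hterm : ∀ i j, a * (G.1 i j * G.1 i j) = 0 ∧ b * (G.2 i j * G.2 i j) = 0 := by
    have hsum : ∀ i j, 0 ≤ a * (G.1 i j * G.1 i j) + b * (G.2 i j * G.2 i j) :=
      fun i j => add_nonneg (hnonneg _ a ha) (hnonneg _ b hb)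
    intro i j
    have hrow := (sum_eq_zero_iff_of_nonneg fun i _ => sum_nonneg fun j _ => hsum i j).mp h i
      (mem_univ i)
    exact (add_eq_zero_iff_of_nonneg (hnonneg _ a ha) (hnonneg _ b hb)).mp
      ((sum_eq_zero_iff_of_nonneg fun j _ => hsum i j).mp hrow j (mem_univ j))
  ext i j
  · exact mul_self_eq_zero.mp ((mul_eq_zero.mp (hterm i j).1).resolve_left ha.ne')
  · exact mul_self_eq_zero.mp ((mul_eq_zero.mp (hterm i j).2).resolve_left hb.ne')

lemma weightedInner_eq_zero_of_nonStrategic {E N : Game m n} (hE : NonStrategic E)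
    (hN : Normalized N) : weightedInner a b E N = 0 := by
  obtain ⟨x, y, hx, hy⟩ := hE
  simp only [weightedInner, hx, hy, sum_add_distrib, ← mul_sum]
  rw [sum_comm]
  simp only [← mul_sum, hN.1, hN.2, mul_zero, sum_const_zero, add_zero]

lemma weightedInner_eq_zero_of_harmonic {H P : Game m n} (hH : Normalized H)
    (hab : a • H.1 + b • H.2 = 0) (hP : IsPotentialGame P) : weightedInner a b H P = 0 := by
  obtain ⟨I, E, hI, hE, rfl⟩ := hP
  rw [weightedInner_add_right, weightedInner_comm H E, weightedInner_eq_zero_of_nonStrategic hE hH,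
    add_zero]
  have hentry : ∀ i j, a * H.1 i j + b * H.2 i j = 0 := fun i j => by
    simpa using congrFun (congrFun hab i) j
  have hI : I.2 = I.1 := hI.symm
  simp only [weightedInner, hI]
  exact sum_eq_zero fun i _ => sum_eq_zero fun j _ => by linear_combination I.1 i j * hentry i j

end weightedInner

lemma eq_zero_of_add_add_eq_zero (hm : 0 < m) (hn : 0 < n) {P H E : Game m n}
    (hP : NormPotential P) (hH : NormHarmonic m n H) (hE : NonStrategic E) (h : P + H + E = 0) :
    P = 0 ∧ H = 0 ∧ E = 0 := by
  have hpos : ∀ G : Game m n, weightedInner m n G G = 0 → G = 0 := fun _ =>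
    eq_zero_of_weightedInner_self_eq_zero (Nat.cast_pos.mpr hm) (Nat.cast_pos.mpr hn)
  have hE0 : E = 0 := hpos E <| by
    have := congrArg (weightedInner m n E) h
    rwa [weightedInner_add_right, weightedInner_add_right,
      weightedInner_eq_zero_of_nonStrategic hE hP.1, weightedInner_eq_zero_of_nonStrategic hE hH.1,
      weightedInner_zero_right, zero_add, zero_add] at this
  rw [hE0, add_zero] at h
  have hH0 : H = 0 := hpos H <| by
    have := congrArg (weightedInner m n H) h
    rwa [weightedInner_add_right, weightedInner_eq_zero_of_harmonic hH.1 hH.2 hP.2,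
      weightedInner_zero_right, zero_add] at this
  rw [hH0, add_zero] at h
  exact ⟨h, hH0, hE0⟩

lemma exists_normalized_add_nonStrategic (hm : 0 < m) (hn : 0 < n) (G : Game m n) :
    ∃ N E : Game m n, Normalized N ∧ NonStrategic E ∧ G = N + E := by
  have hm' : (m : ℝ) ≠ 0 := Nat.cast_ne_zero.mpr hm.ne'
  have hn' : (n : ℝ) ≠ 0 := Nat.cast_ne_zero.mpr hn.ne'
  let E : Game m n := (of fun _ j => (∑ k, G.1 k j) / m, of fun i _ => (∑ l, G.2 i l) / n)
  refine ⟨G - E, E, ⟨fun j => ?_, fun i => ?_⟩, ⟨_, _, fun _ _ => rfl, fun _ _ => rfl⟩, by abel⟩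
  · simp [E, sum_sub_distrib, mul_div_cancel₀ _ hm']
  · simp [E, sum_sub_distrib, mul_div_cancel₀ _ hn']

noncomputable def doubleCenter (M : Matrix (Fin m) (Fin n) ℝ) : Matrix (Fin m) (Fin n) ℝ :=
  of fun i j => M i j - (∑ l, M i l) / n - (∑ k, M k j) / m + (∑ k, ∑ l, M k l) / (m * n)

lemma sum_doubleCenter_row (hn : 0 < n) (M : Matrix (Fin m) (Fin n) ℝ) (i : Fin m) :
    ∑ j, doubleCenter M i j = 0 := by
  have hn' : (n : ℝ) ≠ 0 := Nat.cast_ne_zero.mpr hn.ne'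
  simp only [doubleCenter, sum_comm (f := fun k j => M k j), of_apply, sum_add_distrib,
    sum_sub_distrib, sum_const, card_univ, Fintype.card_fin, nsmul_eq_mul, ← sum_div]
  field_simp
  ring

lemma sum_doubleCenter_col (hm : 0 < m) (M : Matrix (Fin m) (Fin n) ℝ) (j : Fin n) :
    ∑ i, doubleCenter M i j = 0 := by
  have hm' : (m : ℝ) ≠ 0 := Nat.cast_ne_zero.mpr hm.ne'
  simp only [doubleCenter, of_apply, sum_add_distrib, sum_sub_distrib, ← sum_div, sum_const,
    card_univ, Fintype.card_fin, nsmul_eq_mul]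
  field_simp
  ring

lemma isPotentialGame_of_sub_eq_add {P : Game m n} (u : Fin m → ℝ) (v : Fin n → ℝ)
    (h : ∀ i j, P.1 i j - P.2 i j = u i + v j) : IsPotentialGame P := by
  refine ⟨(of fun i j => P.1 i j - v j, of fun i j => P.1 i j - v j),
    (of fun _ j => v j, of fun i _ => -u i), rfl, ⟨v, -u, fun _ _ => rfl, fun _ _ => rfl⟩, ?_⟩
  ext i j
  · simp
  · simp only [Prod.mk_add_mk, of_add_of, of_apply, Pi.add_apply]
    linarith [h i j]

lemma Normalized.exists_normPotential_add_normHarmonic (hm : 0 < m) (hn : 0 < n) {N : Game m n}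
    (hN : Normalized N) : ∃ P H : Game m n, NormPotential P ∧ NormHarmonic m n H ∧ N = P + H := by
  have hm' : (m : ℝ) ≠ 0 := Nat.cast_ne_zero.mpr hm.ne'
  have hn' : (n : ℝ) ≠ 0 := Nat.cast_ne_zero.mpr hn.ne'
  have hmn : (m : ℝ) + n ≠ 0 := by positivity
  let K := doubleCenter (N.1 - N.2)
  let H : Game m n := ((n / (m + n) : ℝ) • K, -(m / (m + n) : ℝ) • K)
  have hH : NormHarmonic m n H := by
    refine ⟨⟨fun j => ?_, fun i => ?_⟩, ?_⟩
    · simp [H, K, ← mul_sum, sum_doubleCenter_col hm]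
    · simp [H, K, ← mul_sum, sum_doubleCenter_row hn]
    · ext i j
      simp only [H, neg_smul, Matrix.add_apply, Matrix.smul_apply, smul_eq_mul, Matrix.neg_apply,
        Matrix.zero_apply]
      ring
  refine ⟨N - H, H, ⟨hN.sub hH.1, isPotentialGame_of_sub_eq_add
    (fun i => (∑ l, (N.1 - N.2) i l) / n)
    (fun j => (∑ k, (N.1 - N.2) k j) / m - (∑ k, ∑ l, (N.1 - N.2) k l) / (m * n)) fun i j => ?_⟩,
    hH, by abel⟩
  simp only [H, K, doubleCenter, Prod.fst_sub, Prod.snd_sub, Matrix.sub_apply, Matrix.smul_apply,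
    of_apply, smul_eq_mul, neg_mul, sub_neg_eq_add]
  field_simp
  ring

theorem stmt5 {m n : ℕ} (hm : 1 ≤ m) (hn : 1 ≤ n) (G : Game m n) :
    ∃! d : Game m n × Game m n × Game m n,
      NormPotential d.1 ∧
      NormHarmonic m n d.2.1 ∧
      NonStrategic d.2.2 ∧
      G = d.1 + d.2.1 + d.2.2 := by
  obtain ⟨N, E, hN, hE, rfl⟩ := exists_normalized_add_nonStrategic hm hn G
  obtain ⟨P, H, hP, hH, rfl⟩ := hN.exists_normPotential_add_normHarmonic hm hn
  refine ⟨(P, H, E), ⟨hP, hH, hE, rfl⟩, ?_⟩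
  rintro ⟨P', H', E'⟩ ⟨hP', hH', hE', hsum⟩
  dsimp only at hP' hH' hE' hsum
  obtain ⟨hP0, hH0, hE0⟩ := eq_zero_of_add_add_eq_zero hm hn (hP'.sub hP) (hH'.sub hH) (hE'.sub hE)
    (by linear_combination (norm := abel) hsum.symm)
  rw [sub_eq_zero.mp hP0, sub_eq_zero.mp hH0, sub_eq_zero.mp hE0]
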